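/- The assignment t°_{ij}(u) ↦ t_{ij}(−u) for 1 ≤ i, j ≤ n defines an algebra homomorphism from the Yangian Y(gl_n) into the extended Yangian X(osp_{1|2n}); consequently, for any highest weight X(osp_{1|2n})-module with highest vector ξ and highest weight (λ_1(u),…,λ_{n+1}(u)), the cyclic span Y(gl_n)·ξ is a highest weight Y(gl_n)-module with highest weight (λ_1(−u),…,λ_n(−u)). -/

import Mathlib

/-!
Common definitions for the Yangian `X(osp_{1|2n})` associated with the orthosymplectic
Lie superalgebra `osp(1|2n)`, following Molev, "Representations of the Yangians
associated with Lie superalgebras osp(1|2n)".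

Indices are 0-based: the index set {1,…,2n+1} of the paper corresponds to `Fin (2n+1)`,
the involution i ↦ i′ = 2n−i+2 corresponds to `pr : i ↦ 2n−i`, the parity ī is 1 unless
i is the middle index `n`, and τ_i = 1 for i ≤ n and −1 for i > n.

The extended Yangian is presented by the coefficients `t_{ij}^{(r)}` (`r ≥ 1`) of the series
`t_{ij}(u) = δ_{ij} + Σ_{r≥1} t_{ij}^{(r)} u^{−r}`, subject to the defining RTT relations,
written in the equivalent explicit component form (formula (2.9) of the paper), with
denominators cleared.  Working with the variables `x = u⁻¹` and `y = v⁻¹`, so that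
`u − v = (y−x)/(xy)` and `u − v − κ = (y − x − κxy)/(xy)`, the relation
`[t_{ij}(u), t_{kl}(v)] = (u−v)⁻¹ (⋯) − (u−v−κ)⁻¹ (⋯)` becomes the power series identity
`relL = relR` below, and the Yangian is the quotient of the free algebra by the
coefficient-wise relations.
-/

noncomputable section

namespace OspYangian

open Finset

/-- The size of the index set: `2n+1`. -/
abbrev NN (n : ℕ) : ℕ := 2 * n + 1

/-- Convenient constructor for indices. -/
def idx {n : ℕ} (i : ℕ) (h : i < 2 * n + 1) : Fin (NN n) := ⟨i, h⟩

/-- The involution `i ↦ i′` (0-based: `i ↦ 2n − i`). -/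
def pr {n : ℕ} (i : Fin (NN n)) : Fin (NN n) := idx (2 * n - (i : ℕ)) (by omega)

/-- The parity `ī`: `0` for the (even) middle index, `1` for the (odd) remaining ones. -/
def pb {n : ℕ} (i : Fin (NN n)) : ℕ := if (i : ℕ) = n then 0 else 1

/-- The sign `τ_i`: `1` for `i ≤ n`, `−1` for `i > n` (0-based). -/
def tau {n : ℕ} (i : Fin (NN n)) : ℂ := if (i : ℕ) ≤ n then 1 else -1

/-- `κ = −n − 1/2`. -/
def kappa (n : ℕ) : ℂ := -(n : ℂ) - 1 / 2

/-- The sign `(−1)^m`. -/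
def sg (m : ℕ) : ℂ := (-1 : ℂ) ^ m

section GenericSeries

variable {I : Type*} {A : Type*} [Ring A] [Algebra ℂ A]

/-- Given a family `t i j : ℕ → A` of coefficients of series `t_{ij}(u) = Σ_r t_{ij}^{(r)} u^{−r}`,
the series `t_{ij}(u)` as an element of `A⟦x⟧⟦y⟧` (constant in `y`), where `x = u⁻¹`. -/
def Tx (t : I → I → ℕ → A) (i j : I) : PowerSeries (PowerSeries A) :=
  PowerSeries.C (PowerSeries.mk (t i j))

/-- The series `t_{ij}(v)` as an element of `A⟦x⟧⟦y⟧` (constant in `x`), where `y = v⁻¹`. -/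
def Ty (t : I → I → ℕ → A) (i j : I) : PowerSeries (PowerSeries A) :=
  PowerSeries.mk fun r => PowerSeries.C (t i j r)

/-- The element `x = u⁻¹` of `A⟦x⟧⟦y⟧`. -/
def Xv (A : Type*) [Ring A] : PowerSeries (PowerSeries A) :=
  PowerSeries.C PowerSeries.X

/-- The element `y = v⁻¹` of `A⟦x⟧⟦y⟧`. -/
def Yv (A : Type*) [Ring A] : PowerSeries (PowerSeries A) := PowerSeries.X

end GenericSeries

section RTT

variable {A : Type*} [Ring A] [Algebra ℂ A]

/-- Left-hand side of the defining relation of `X(osp_{1|2n})` for a family `t` of series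
coefficients: `(u−v)(u−v−κ)·[t_{ij}(u), t_{kl}(v)]` (super-commutator), multiplied by `(xy)²`
to clear denominators; here `x = u⁻¹`, `y = v⁻¹`. -/
def relL (n : ℕ) (t : Fin (NN n) → Fin (NN n) → ℕ → A) (i j k l : Fin (NN n)) :
    PowerSeries (PowerSeries A) :=
  (Yv A - Xv A) * (Yv A - Xv A - kappa n • (Xv A * Yv A)) *
    (Tx t i j * Ty t k l - sg ((pb i + pb j) * (pb k + pb l)) • (Ty t k l * Tx t i j))

/-- Right-hand side of the defining relation of `X(osp_{1|2n})`:
`(u−v−κ)·A − (u−v)·B` multiplied by `(xy)²`, where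
`A = (−1)^{īj̄+īk̄+j̄k̄} (t_{kj}(u)t_{il}(v) − t_{kj}(v)t_{il}(u))` and
`B = δ_{k i′} Σ_p (−1)^{ī+īj̄+j̄p̄} τ_iτ_p t_{pj}(u)t_{p′l}(v)
   − δ_{l j′} Σ_p (−1)^{j̄+p̄+īk̄+j̄k̄+īp̄} τ_jτ_p t_{kp′}(v)t_{ip}(u)`. -/
def relR (n : ℕ) (t : Fin (NN n) → Fin (NN n) → ℕ → A) (i j k l : Fin (NN n)) :
    PowerSeries (PowerSeries A) :=
  (Xv A * Yv A) * (Yv A - Xv A - kappa n • (Xv A * Yv A)) *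
    (sg (pb i * pb j + pb i * pb k + pb j * pb k) •
      (Tx t k j * Ty t i l - Ty t k j * Tx t i l))
  - (Xv A * Yv A) * (Yv A - Xv A) *
    ((if k = pr i then
        ∑ p : Fin (NN n), (sg (pb i + pb i * pb j + pb j * pb p) * tau i * tau p) •
          (Tx t p j * Ty t (pr p) l)
      else 0)
     - (if l = pr j then
        ∑ p : Fin (NN n), (sg (pb j + pb p + pb i * pb k + pb j * pb k + pb i * pb p)
            * tau j * tau p) • (Ty t k (pr p) * Tx t i p)
      else 0))

/-- A family of matrix elements `t i j : ℕ → A` (the coefficients of series `t_{ij}(u)`)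
satisfies the defining `RTT`-relation of `X(osp_{1|2n})`. -/
def SatisfiesRTT (n : ℕ) (t : Fin (NN n) → Fin (NN n) → ℕ → A) : Prop :=
  ∀ i j k l : Fin (NN n), relL n t i j k l = relR n t i j k l

end RTT

/-- The free algebra on the generators `t_{ij}^{(r)}`, `r ≥ 1` (the last component `r : ℕ`
encodes the generator `t_{ij}^{(r+1)}`). -/
abbrev FA (n : ℕ) := FreeAlgebra ℂ (Fin (NN n) × Fin (NN n) × ℕ)

/-- The coefficients of the generating series `t_{ij}(u)` in the free algebra:
`t_{ij}^{(0)} = δ_{ij}` and `t_{ij}^{(r)}` is a free generator for `r ≥ 1`. -/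
def fgen (n : ℕ) : Fin (NN n) → Fin (NN n) → ℕ → FA n := fun i j r =>
  if r = 0 then (if i = j then 1 else 0) else FreeAlgebra.ι ℂ (i, j, r - 1)

/-- The defining relations of the extended Yangian: all coefficients of `relL` are identified
with the corresponding coefficients of `relR`. -/
def yrel (n : ℕ) : FA n → FA n → Prop := fun a b =>
  ∃ (i j k l : Fin (NN n)) (r s : ℕ),
    a = PowerSeries.coeff s
          (PowerSeries.coeff r (relL n (fgen n) i j k l)) ∧
    b = PowerSeries.coeff s
          (PowerSeries.coeff r (relR n (fgen n) i j k l))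

/-- The extended Yangian `X(osp_{1|2n})`. -/
abbrev XX (n : ℕ) := RingQuot (yrel n)

/-- The coefficient `t_{ij}^{(r)}` of the series `t_{ij}(u) = Σ_{r≥0} t_{ij}^{(r)} u^{−r}`
in the extended Yangian (`TT n i j 0 = δ_{ij}`). -/
def TT (n : ℕ) (i j : Fin (NN n)) (r : ℕ) : XX n :=
  RingQuot.mkAlgHom ℂ (yrel n) (fgen n i j r)

section Shift

variable {M : Type*} [AddCommMonoid M] [Module ℂ M]

/-- The coefficient of `u^{−s}` in `f(u+a)`, where `f(u) = Σ_r c r · u^{−r}`: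
`Σ_{r≤s} (−1)^{s−r} C(s−1, s−r) a^{s−r} · c r`. -/
def shiftCoeff (a : ℂ) (c : ℕ → M) (s : ℕ) : M :=
  ∑ r ∈ Finset.range (s + 1),
    ((-1 : ℂ) ^ (s - r) * (Nat.choose (s - 1) (s - r) : ℂ) * a ^ (s - r)) • c r

/-- For a power series `f` in `u⁻¹`, the power series of `f(u+a)` in `u⁻¹`. -/
def shiftSeries (a : ℂ) (f : PowerSeries ℂ) : PowerSeries ℂ :=
  PowerSeries.mk fun s => shiftCoeff a (fun r => PowerSeries.coeff r f) s

end Shift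

/-- The consistency conditions (3.4) of the paper:
`λ_i(u) λ_{i′}(u+n−i+1/2) = λ_{i+1}(u) λ_{(i+1)′}(u+n−i+1/2)` for `i = 1,…,n`
(0-based: positions `i` and `i+1` with `i < n`, shift `n − i − 1/2`). -/
def Consistent (n : ℕ) (lam : Fin (NN n) → PowerSeries ℂ) : Prop :=
  ∀ (i : ℕ) (h : i < n),
    lam (idx i (by omega)) *
        shiftSeries ((n : ℂ) - (i : ℂ) - 1 / 2) (lam (pr (idx i (by omega)))) =
      lam (idx (i + 1) (by omega)) *
        shiftSeries ((n : ℂ) - (i : ℂ) - 1 / 2) (lam (pr (idx (i + 1) (by omega))))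

/-- `V` is a highest weight module over `X(osp_{1|2n})` with highest vector `xi` and
highest weight `lam` (a tuple of series in `1 + u⁻¹ℂ[[u⁻¹]]`): `xi` is nonzero, generates `V`,
is annihilated by all `t_{ij}(u)` with `i < j` and is an eigenvector of all `t_{ii}(u)`
with eigenvalue the series `λ_i(u)`. -/
def IsHighestWeight (n : ℕ) {V : Type*} [AddCommGroup V] [Module ℂ V] [Module (XX n) V]
    (xi : V) (lam : Fin (NN n) → PowerSeries ℂ) : Prop :=
  xi ≠ 0 ∧ Submodule.span (XX n) {xi} = ⊤ ∧
  (∀ i j : Fin (NN n), i < j → ∀ r : ℕ, TT n i j r • xi = 0) ∧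
  (∀ (i : Fin (NN n)) (r : ℕ), TT n i i r • xi = (PowerSeries.coeff r (lam i)) • xi) ∧
  (∀ i : Fin (NN n), PowerSeries.constantCoeff (lam i) = 1)

/-- The generators of the left ideal defining the Verma module `M(λ(u))`: all coefficients
`t_{ij}^{(r)}`, `r ≥ 1`, with `i < j`, and all `t_{ii}^{(r)} − λ_i^{(r)}`, `r ≥ 1`. -/
def vermaGens (n : ℕ) (lam : Fin (NN n) → PowerSeries ℂ) : Set (XX n) :=
  {x | (∃ (i j : Fin (NN n)) (r : ℕ), i < j ∧ x = TT n i j (r + 1)) ∨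
       (∃ (i : Fin (NN n)) (r : ℕ),
         x = TT n i i (r + 1) - algebraMap ℂ (XX n) (PowerSeries.coeff (r + 1) (lam i)))}

/-- The left ideal defining the Verma module `M(λ(u))`. -/
def vermaIdeal (n : ℕ) (lam : Fin (NN n) → PowerSeries ℂ) : Submodule (XX n) (XX n) :=
  Submodule.span (XX n) (vermaGens n lam)

/-- The Verma module `M(λ(u))`. -/
abbrev Verma (n : ℕ) (lam : Fin (NN n) → PowerSeries ℂ) :=
  XX n ⧸ vermaIdeal n lam

/-- The sum of all proper submodules of the Verma module `M(λ(u))` (its unique maximal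
proper submodule). -/
def vermaRad (n : ℕ) (lam : Fin (NN n) → PowerSeries ℂ) : Submodule (XX n) (Verma n lam) :=
  sSup {W : Submodule (XX n) (Verma n lam) | W ≠ ⊤}

/-- The irreducible quotient `L(λ(u))` of the Verma module `M(λ(u))`. -/
abbrev Lmod (n : ℕ) (lam : Fin (NN n) → PowerSeries ℂ) :=
  Verma n lam ⧸ vermaRad n lam

/-- The Drinfeld polynomial condition `λ₊(u)/λ₋(u) = P(u+1)/P(u)` for a pair of series
`λ₋(u), λ₊(u) ∈ 1 + u⁻¹ℂ[[u⁻¹]]` and a polynomial `P`, i.e. the equality of series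
`λ₊(u)·u^{−deg P}·P(u) = λ₋(u)·u^{−deg P}·P(u+1)`; here `u^{−deg P}·P(u)` is the reversed
polynomial `P.reverse` regarded as a power series in `u⁻¹`. -/
def DrinfeldPair (lamLow lamHigh : PowerSeries ℂ) (P : Polynomial ℂ) : Prop :=
  lamHigh * ((P.reverse : Polynomial ℂ) : PowerSeries ℂ) =
    lamLow * (((P.comp (Polynomial.X + 1)).reverse : Polynomial ℂ) : PowerSeries ℂ)

end OspYangian
namespace OspYangian

open Finset

section ModuleLemmas

variable {n : ℕ} {V : Type*} [AddCommGroup V] [Module ℂ V] [Module (XX n) V]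
  [IsScalarTower ℂ (XX n) V]

theorem smul_comm_alg (c : ℂ) (x : XX n) (v : V) : x • (c • v) = c • (x • v) := by
  rw [← algebraMap_smul (XX n) c v, ← mul_smul, ← Algebra.commutes, mul_smul,
    algebraMap_smul]

end ModuleLemmas

section Vplus

variable (n : ℕ) (V : Type*) [AddCommGroup V] [Module ℂ V] [Module (XX n) V]
  [IsScalarTower ℂ (XX n) V]

/-- The subspace `V⁺ = {η ∈ V | t_{1j}(u)η = 0 (j > 1), t_{i1′}(u)η = 0 (i < 1′)}`
(0-based: first index `0`, last index `2n`). -/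
def Vplus : Set V :=
  {η | (∀ j : Fin (NN n), 0 < (j : ℕ) → ∀ r : ℕ, TT n (idx 0 (by omega)) j r • η = 0) ∧
       (∀ i : Fin (NN n), (i : ℕ) < 2 * n → ∀ r : ℕ, TT n i (idx (2 * n) (by omega)) r • η = 0)}

/-- `V⁺` as a `ℂ`-subspace of `V`. -/
def VplusSub : Submodule ℂ V where
  carrier := Vplus n V
  zero_mem' := ⟨fun _ _ _ => smul_zero _, fun _ _ _ => smul_zero _⟩
  add_mem' := by
    rintro a b ⟨h1, h2⟩ ⟨g1, g2⟩
    exact ⟨fun j hj r => by rw [smul_add, h1 j hj r, g1 j hj r, add_zero],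
           fun i hi r => by rw [smul_add, h2 i hi r, g2 i hi r, add_zero]⟩
  smul_mem' := by
    rintro c x ⟨h1, h2⟩
    exact ⟨fun j hj r => by rw [smul_comm_alg, h1 j hj r, smul_zero],
           fun i hi r => by rw [smul_comm_alg, h2 i hi r, smul_zero]⟩

/-- The subspace `V⁰ = {η ∈ V | t_{ij}(u)η = 0 for all i < j}`. -/
def Vzero : Set V :=
  {η | ∀ i j : Fin (NN n), i < j → ∀ r : ℕ, TT n i j r • η = 0}

end Vplus

/-- The embedding of index sets `{1,…,2n+1} ↪ {1,…,2(n+1)+1}`, `i ↦ i+1`, used in the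
reduction from `X(osp_{1|2(n+1)})` to `X(osp_{1|2n})`. -/
def emb {m : ℕ} (i : Fin (NN m)) : Fin (NN (m + 1)) :=
  idx ((i : ℕ) + 1) (by have h : (i : ℕ) < 2 * m + 1 := i.isLt; omega)

section Yangian

/-- `φ` is the automorphism `t_{ij}(u) ↦ f(u) t_{ij}(u)` of `X(osp_{1|2n})`
for the series `f(u) = Σ_s f_s u^{−s}` with `f_0 = 1`. -/
def IsMultAut (n : ℕ) (f : ℕ → ℂ) (φ : XX n →ₐ[ℂ] XX n) : Prop :=
  f 0 = 1 ∧ ∀ (i j : Fin (NN n)) (r : ℕ),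
    φ (TT n i j r) = ∑ s ∈ Finset.range (r + 1), f s • TT n i j (r - s)

/-- The Yangian `Y(osp_{1|2n})`: the subalgebra of `X(osp_{1|2n})` of elements stable under
all the automorphisms `t_{ij}(u) ↦ f(u) t_{ij}(u)`. -/
def Ysub (n : ℕ) : Subalgebra ℂ (XX n) where
  carrier := {z | ∀ (f : ℕ → ℂ) (φ : XX n →ₐ[ℂ] XX n), IsMultAut n f φ → φ z = z}
  mul_mem' := by
    intro a b ha hb f φ hφ
    rw [map_mul, ha f φ hφ, hb f φ hφ]
  one_mem' := by
    intro f φ hφ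
    exact map_one φ
  add_mem' := by
    intro a b ha hb f φ hφ
    rw [map_add, ha f φ hφ, hb f φ hφ]
  zero_mem' := by
    intro f φ hφ
    exact map_zero φ
  algebraMap_mem' := by
    intro c f φ hφ
    exact φ.commutes c

/-- A finite-dimensional irreducible representation of the Yangian `Y(osp_{1|2n})`. -/
structure FDRep (n : ℕ) where
  carrier : Type
  [ab : AddCommGroup carrier]
  [mc : Module ℂ carrier]
  [my : Module (Ysub n) carrier]
  [tw : IsScalarTower ℂ (Ysub n) carrier]
  fd : FiniteDimensional ℂ carrier
  simple : IsSimpleModule (Ysub n) carrier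

attribute [instance] FDRep.ab FDRep.mc FDRep.my FDRep.tw

/-- Isomorphism of representations of `Y(osp_{1|2n})`. -/
def fdrepSetoid (n : ℕ) : Setoid (FDRep n) where
  r V W := Nonempty (V.carrier ≃ₗ[Ysub n] W.carrier)
  iseqv := ⟨fun _ => ⟨LinearEquiv.refl _ _⟩,
    fun ⟨e⟩ => ⟨e.symm⟩, fun ⟨e⟩ ⟨f⟩ => ⟨e.trans f⟩⟩

end Yangian

end OspYangian
namespace OspYangian

open Finset

section VectorRep

variable (n : ℕ)

/-- The coefficient at `u^{−r}` of the image of `t_{ij}(u)` under the vector representation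
`t_{ij}(u) ↦ δ_{ij} + u⁻¹ e_{ij} (−1)^{ī} − (u+κ)⁻¹ e_{j′i′} (−1)^{īj̄} τ_i τ_j`
of `X(osp_{1|2n})` on `ℂ^{1|2n}`, as a matrix. -/
def vecMat (i j : Fin (NN n)) (r : ℕ) : Matrix (Fin (NN n)) (Fin (NN n)) ℂ :=
  if r = 0 then (if i = j then 1 else 0)
  else (if r = 1 then (sg (pb i)) • Matrix.single i j (1 : ℂ) else 0)
    - ((-(kappa n)) ^ (r - 1) * sg (pb i * pb j) * tau i * tau j) •
        Matrix.single (pr j) (pr i) (1 : ℂ)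

/-- The entry at `(a,b)` of the matrix of `t_{ij}(u)` in the vector representation,
as a function of a complex number `u`. -/
def vrepE (u : ℂ) (i j a b : Fin (NN n)) : ℂ :=
  (if i = j ∧ a = b then 1 else 0)
  + u⁻¹ * sg (pb i) * (if a = i ∧ b = j then 1 else 0)
  - (u + kappa n)⁻¹ * sg (pb i * pb j) * tau i * tau j *
      (if a = pr j ∧ b = pr i then 1 else 0)

/-- The entry at `(a,b)` of the coefficient at `u^{−s}` of the matrix of `t_{ij}(u−m)` in the
vector representation, using `(u−m)⁻¹ = Σ_{s≥1} m^{s−1} u^{−s}` and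
`(u−m+κ)⁻¹ = Σ_{s≥1} (m−κ)^{s−1} u^{−s}`. -/
def vrepCE (m : ℂ) (s : ℕ) (i j a b : Fin (NN n)) : ℂ :=
  if s = 0 then (if i = j ∧ a = b then 1 else 0)
  else m ^ (s - 1) * sg (pb i) * (if a = i ∧ b = j then 1 else 0)
    - (m - kappa n) ^ (s - 1) * sg (pb i * pb j) * tau i * tau j *
        (if a = pr j ∧ b = pr i then 1 else 0)

variable (k : ℕ)

/-- The `k`-fold tensor power `(ℂ^{1|2n})^{⊗k}`, realized as functions on multi-indices. -/
abbrev Wk := (Fin k → Fin (NN n)) → ℂ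

/-- The Koszul sign arising when the elementary tensor operator
`t_{a_0 a_1} ⊗ t_{a_1 a_2} ⊗ ⋯ ⊗ t_{a_{k−1} a_k}` (each factor of parity
`p(a_{p−1}) + p(a_p)`) is applied to the basis vector `e_{d_1} ⊗ ⋯ ⊗ e_{d_k}`:
`(−1)^{Σ_p (p(a_{p−1})+p(a_p))·(p(d_1)+⋯+p(d_{p−1}))}`. -/
def kosz (a : Fin (k + 1) → Fin (NN n)) (d : Fin k → Fin (NN n)) : ℂ :=
  sg (∑ p : Fin k, (pb (a p.castSucc) + pb (a p.succ)) *
    (∑ q : Fin k, if (q : ℕ) < (p : ℕ) then pb (d q) else 0))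

/-- The matrix of the operator
`T_{ij}(u) = Σ_{a_1,…,a_{k−1}} t_{i a_1}(u) ⊗ t_{a_1 a_2}(u−1) ⊗ ⋯ ⊗ t_{a_{k−1} j}(u−k+1)`
on `(ℂ^{1|2n})^{⊗k}`, each tensor factor acting through the vector representation and the
tensor products taken with the super sign convention. -/
def TopMat (u : ℂ) (i j : Fin (NN n)) :
    Matrix (Fin k → Fin (NN n)) (Fin k → Fin (NN n)) ℂ := fun c d =>
  ∑ a : Fin (k + 1) → Fin (NN n),
    if a 0 = i ∧ a (Fin.last k) = j then
      kosz n k a d *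
        ∏ p : Fin k, vrepE n (u - ((p : ℕ) : ℂ)) (a p.castSucc) (a p.succ) (c p) (d p)
    else 0

/-- The matrix of the coefficient at `u^{−r}` of the operator `T_{ij}(u)` on
`(ℂ^{1|2n})^{⊗k}` (sum over compositions `r = r_1 + ⋯ + r_k` of products of coefficients of
the shifted vector representations). -/
def TopCMat (r : ℕ) (i j : Fin (NN n)) :
    Matrix (Fin k → Fin (NN n)) (Fin k → Fin (NN n)) ℂ := fun c d =>
  ∑ a : Fin (k + 1) → Fin (NN n),
    if a 0 = i ∧ a (Fin.last k) = j then
      kosz n k a d *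
        ∑ rr ∈ Finset.Nat.antidiagonalTuple k r,
          ∏ p : Fin k, vrepCE n ((p : ℕ) : ℂ) (rr p) (a p.castSucc) (a p.succ) (c p) (d p)
    else 0

/-- The antisymmetric vector `ξ_k = Σ_{σ ∈ S_k} sgn(σ) e_{σ(1)} ⊗ ⋯ ⊗ e_{σ(k)}`. -/
def xiVec (hk : k ≤ NN n) : Wk n k := fun c =>
  ∑ σ : Equiv.Perm (Fin k),
    ((Equiv.Perm.sign σ : ℤ) : ℂ) * (if c = fun p => Fin.castLE hk (σ p) then 1 else 0)

end VectorRep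

section SuperTranspose

variable (n : ℕ)

/-- The super-transposition `t : End ℂ^{1|2n} → End ℂ^{1|2n}`, the linear extension of
`e_{ij} ↦ e_{j′i′} (−1)^{īj̄+ī} τ_i τ_j`. -/
def stpM (A : Matrix (Fin (NN n)) (Fin (NN n)) ℂ) : Matrix (Fin (NN n)) (Fin (NN n)) ℂ :=
  ∑ i : Fin (NN n), ∑ j : Fin (NN n),
    (A i j * sg (pb i * pb j + pb i) * tau i * tau j) •
      Matrix.single (pr j) (pr i) (1 : ℂ)

/-- `End(ℂ^{1|2n}) ⊗ End(ℂ^{1|2n})` realized as operators on `ℂ^{1|2n} ⊗ ℂ^{1|2n}`. -/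
abbrev MatP := Matrix (Fin (NN n) × Fin (NN n)) (Fin (NN n) × Fin (NN n)) ℂ

/-- The elementary tensor `e_{ij} ⊗ e_{kl}` as an operator on `ℂ^{1|2n} ⊗ ℂ^{1|2n}`,
with the Koszul sign convention `(a ⊗ b)(v ⊗ w) = (−1)^{|b||v|} av ⊗ bw`. -/
def elemT2 (i j k l : Fin (NN n)) : MatP n := fun x y =>
  if x = (i, k) ∧ y = (j, l) then sg ((pb k + pb l) * pb j) else 0

/-- The operator `P = Σ_{i,j} e_{ij} ⊗ e_{ji} (−1)^{j̄}`. -/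
def Pmat : MatP n := ∑ i : Fin (NN n), ∑ j : Fin (NN n), sg (pb j) • elemT2 n i j j i

/-- The operator `Q = Σ_{i,j} e_{ij} ⊗ e_{i′j′} (−1)^{īj̄} τ_i τ_j`. -/
def Qmat : MatP n := ∑ i : Fin (NN n), ∑ j : Fin (NN n),
  (sg (pb i * pb j) * tau i * tau j) • elemT2 n i j (pr i) (pr j)

/-- The super-transposition applied to the first tensor factor of
`End(ℂ^{1|2n}) ⊗ End(ℂ^{1|2n})`: extract the coefficients of `M` on elementary tensors
`e_{ij} ⊗ e_{kl}` and apply `t(e_{ij}) = e_{j′i′}(−1)^{īj̄+ī}τ_iτ_j`. -/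
def stp1 (M : MatP n) : MatP n :=
  ∑ i : Fin (NN n), ∑ j : Fin (NN n), ∑ k : Fin (NN n), ∑ l : Fin (NN n),
    (M (i, k) (j, l) * sg ((pb k + pb l) * pb j) * sg (pb i * pb j + pb i) * tau i * tau j) •
      elemT2 n (pr j) (pr i) k l

/-- The super-transposition applied to the second tensor factor. -/
def stp2 (M : MatP n) : MatP n :=
  ∑ i : Fin (NN n), ∑ j : Fin (NN n), ∑ k : Fin (NN n), ∑ l : Fin (NN n),
    (M (i, k) (j, l) * sg ((pb k + pb l) * pb j) * sg (pb k * pb l + pb k) * tau k * tau l) •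
      elemT2 n i j (pr l) (pr k)

/-- `End(ℂ^{1|2n})^{⊗3}` realized as operators on `(ℂ^{1|2n})^{⊗3}`. -/
abbrev Mat3 := Matrix (Fin (NN n) × Fin (NN n) × Fin (NN n))
  (Fin (NN n) × Fin (NN n) × Fin (NN n)) ℂ

/-- The elementary tensor `e_{ij} ⊗ e_{kl} ⊗ e_{mp}` as an operator on `(ℂ^{1|2n})^{⊗3}`
with the Koszul sign convention. -/
def elemT3 (i j k l m p : Fin (NN n)) : Mat3 n := fun x y =>
  if x = (i, k, m) ∧ y = (j, l, p) then
    sg ((pb k + pb l) * pb j + (pb m + pb p) * (pb j + pb l))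
  else 0

/-- `P` placed in the tensor factors 1 and 2 of `End(ℂ^{1|2n})^{⊗3}`. -/
def P12 : Mat3 n := ∑ i : Fin (NN n), ∑ j : Fin (NN n), ∑ m : Fin (NN n),
  sg (pb j) • elemT3 n i j j i m m

/-- `P` placed in the tensor factors 1 and 3. -/
def P13 : Mat3 n := ∑ i : Fin (NN n), ∑ j : Fin (NN n), ∑ m : Fin (NN n),
  sg (pb j) • elemT3 n i j m m j i

/-- `P` placed in the tensor factors 2 and 3. -/
def P23 : Mat3 n := ∑ i : Fin (NN n), ∑ j : Fin (NN n), ∑ m : Fin (NN n),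
  sg (pb j) • elemT3 n m m i j j i

/-- `Q` placed in the tensor factors 1 and 2. -/
def Q12 : Mat3 n := ∑ i : Fin (NN n), ∑ j : Fin (NN n), ∑ m : Fin (NN n),
  (sg (pb i * pb j) * tau i * tau j) • elemT3 n i j (pr i) (pr j) m m

/-- `Q` placed in the tensor factors 1 and 3. -/
def Q13 : Mat3 n := ∑ i : Fin (NN n), ∑ j : Fin (NN n), ∑ m : Fin (NN n),
  (sg (pb i * pb j) * tau i * tau j) • elemT3 n i j m m (pr i) (pr j)

/-- `Q` placed in the tensor factors 2 and 3. -/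
def Q23 : Mat3 n := ∑ i : Fin (NN n), ∑ j : Fin (NN n), ∑ m : Fin (NN n),
  (sg (pb i * pb j) * tau i * tau j) • elemT3 n m m i j (pr i) (pr j)

/-- The `R`-matrix `R(w) = 1 − P/w + Q/(w−κ)` with `P`, `Q` placed in a given pair of
tensor factors. -/
def Rmat3 (Pm Qm : Mat3 n) (w : ℂ) : Mat3 n :=
  1 - w⁻¹ • Pm + (w - kappa n)⁻¹ • Qm

end SuperTranspose

section glYangian

/-- The free algebra on the generators `t°_{ij}^{(r)}`, `r ≥ 1`, of the Yangian `Y(gl_N)`. -/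
abbrev FGl (N : ℕ) := FreeAlgebra ℂ (Fin N × Fin N × ℕ)

/-- The coefficients of the generating series `t°_{ij}(u)` of `Y(gl_N)` in the free algebra. -/
def glgen (N : ℕ) : Fin N → Fin N → ℕ → FGl N := fun i j r =>
  if r = 0 then (if i = j then 1 else 0) else FreeAlgebra.ι ℂ (i, j, r - 1)

/-- Left-hand side of the defining relation of `Y(gl_N)`:
`(u−v)[t°_{ij}(u), t°_{kl}(v)]` multiplied by `xy` (`x = u⁻¹`, `y = v⁻¹`). -/
def relLgl (N : ℕ) (t : Fin N → Fin N → ℕ → FGl N) (i j k l : Fin N) :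
    PowerSeries (PowerSeries (FGl N)) :=
  (Yv (FGl N) - Xv (FGl N)) * (Tx t i j * Ty t k l - Ty t k l * Tx t i j)

/-- Right-hand side of the defining relation of `Y(gl_N)`:
`t°_{kj}(u)t°_{il}(v) − t°_{kj}(v)t°_{il}(u)` multiplied by `xy`. -/
def relRgl (N : ℕ) (t : Fin N → Fin N → ℕ → FGl N) (i j k l : Fin N) :
    PowerSeries (PowerSeries (FGl N)) :=
  (Xv (FGl N) * Yv (FGl N)) * (Tx t k j * Ty t i l - Ty t k j * Tx t i l)

/-- The defining relations of `Y(gl_N)`. -/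
def glrel (N : ℕ) : FGl N → FGl N → Prop := fun a b =>
  ∃ (i j k l : Fin N) (r s : ℕ),
    a = PowerSeries.coeff s
          (PowerSeries.coeff r (relLgl N (glgen N) i j k l)) ∧
    b = PowerSeries.coeff s
          (PowerSeries.coeff r (relRgl N (glgen N) i j k l))

/-- The Yangian `Y(gl_N)`. -/
abbrev Ygl (N : ℕ) := RingQuot (glrel N)

/-- The generator `t°_{ij}^{(r)}` of `Y(gl_N)` (`TG N i j 0 = δ_{ij}`). -/
def TG (N : ℕ) (i j : Fin N) (r : ℕ) : Ygl N :=
  RingQuot.mkAlgHom ℂ (glrel N) (glgen N i j r)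

/-- The embedding of index sets `{1,…,n} ↪ {1,…,2n+1}` used for `Y(gl_n) ↪ X(osp_{1|2n})`. -/
def embgl {n : ℕ} (i : Fin n) : Fin (NN n) :=
  idx (i : ℕ) (by have h : (i : ℕ) < n := i.isLt; omega)

end glYangian

/-- `k ≤ n` implies `k ≤ 2n+1`. -/
theorem le_NN {k n : ℕ} (h : k ≤ n) : k ≤ NN n := by
  have h2 : k ≤ 2 * n + 1 := by omega
  exact h2



end OspYangian

namespace OspYangian

/-!
On the indices `1, …, n` all parities are odd and no index is the image of another under
`i ↦ i′`, so in the defining relation of `X(osp_{1|2n})` the `Q`-terms drop out. Cancelling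
the factor `u − v − κ` leaves the defining relation of `Y(gl_n)` with `P` replaced by `−P`,
and the substitution `(u, v) ↦ (−u, −v)` restores the sign. The statement about highest
weight modules is then immediate, since the image of `t°_{ij}^{(r)}` is `(−1)^r t_{ij}^{(r)}`.
-/

section SeriesInAnInverseVariable

variable {A B : Type*} [Ring A] [Ring B]

lemma Xv_commute (z : PowerSeries (PowerSeries A)) : Commute (Xv A) z := by
  show _ * _ = _ * _
  ext r : 1
  rw [Xv, PowerSeries.coeff_C_mul, PowerSeries.coeff_mul_C]
  exact (PowerSeries.commute_X _).symm.eq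

lemma Yv_commute (z : PowerSeries (PowerSeries A)) : Commute (Yv A) z :=
  (PowerSeries.commute_X z).symm

variable [Algebra ℂ A] [Algebra ℂ B]

/-- The substitution `u ↦ -u` on series in `u⁻¹`. -/
def negVarHom : PowerSeries A →+* PowerSeries A where
  toFun f := PowerSeries.mk fun r => (-1 : ℂ) ^ r • PowerSeries.coeff r f
  map_zero' := by ext; simp
  map_one' := by ext r; by_cases hr : r = 0 <;> simp [PowerSeries.coeff_one, hr]
  map_add' f g := by ext; simp
  map_mul' f g := by
    ext r
    simp only [PowerSeries.coeff_mk, PowerSeries.coeff_mul, Finset.smul_sum]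
    refine Finset.sum_congr rfl fun p hp => ?_
    rw [smul_mul_smul_comm, ← pow_add, Finset.HasAntidiagonal.mem_antidiagonal.mp hp]

@[simp] lemma coeff_negVarHom (r : ℕ) (f : PowerSeries A) :
    PowerSeries.coeff r (negVarHom f) = (-1 : ℂ) ^ r • PowerSeries.coeff r f := by
  simp [negVarHom]

lemma negVarHom_C (a : A) : negVarHom (PowerSeries.C a) = PowerSeries.C a := by
  ext r; by_cases hr : r = 0 <;> simp [PowerSeries.coeff_C, hr]

lemma negVarHom_X : negVarHom (PowerSeries.X : PowerSeries A) = -PowerSeries.X := by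
  ext r; by_cases hr : r = 1 <;> simp [PowerSeries.coeff_X, hr]

/-- The substitution `(u, v) ↦ (-u, -v)` on `A⟦x⟧⟦y⟧`, `x = u⁻¹`, `y = v⁻¹`. -/
def negVarsHom : PowerSeries (PowerSeries A) →+* PowerSeries (PowerSeries A) :=
  negVarHom.comp (PowerSeries.map negVarHom)

lemma negVarsHom_Xv : negVarsHom (Xv A) = -Xv A := by
  simp [negVarsHom, Xv, PowerSeries.map_C, negVarHom_X, negVarHom_C]

lemma negVarsHom_Yv : negVarsHom (Yv A) = -Yv A := by
  simp [negVarsHom, Yv, negVarHom_X]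

lemma negVarsHom_Tx {I : Type*} (t : I → I → ℕ → A) (i j : I) :
    negVarsHom (Tx t i j) = Tx (fun a b r => (-1 : ℂ) ^ r • t a b r) i j := by
  simp only [negVarsHom, Tx, RingHom.comp_apply, PowerSeries.map_C, negVarHom_C]
  congr 1
  ext r
  simp

lemma negVarsHom_Ty {I : Type*} (t : I → I → ℕ → A) (i j : I) :
    negVarsHom (Ty t i j) = Ty (fun a b r => (-1 : ℂ) ^ r • t a b r) i j := by
  ext r s
  by_cases hs : s = 0 <;> simp [negVarsHom, Ty, PowerSeries.coeff_map, negVarHom_C,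
    PowerSeries.coeff_C, hs]

lemma isLeftRegular_Yv_sub_Xv_sub_smul (c : ℂ) :
    IsLeftRegular (Yv A - Xv A - c • (Xv A * Yv A)) := by
  suffices h : ∀ Z, (Yv A - Xv A - c • (Xv A * Yv A)) * Z = 0 → Z = 0 by
    intro Z W hZW
    exact sub_eq_zero.mp (h _ (by rw [mul_sub, sub_eq_zero]; exact hZW))
  intro Z hZ
  set G := Yv A - Xv A - c • (Xv A * Yv A)
  have hcoeff_zero : PowerSeries.coeff 0 (G * Z) = -(PowerSeries.X * PowerSeries.coeff 0 Z) := by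
    simp [G, sub_mul, Xv, Yv, mul_assoc]
  have hcoeff_succ (r : ℕ) : PowerSeries.coeff (r + 1) (G * Z) =
      PowerSeries.coeff r Z - PowerSeries.X * PowerSeries.coeff (r + 1) Z -
        c • (PowerSeries.X * PowerSeries.coeff r Z) := by
    simp [G, sub_mul, Xv, Yv, mul_assoc, PowerSeries.coeff_C_mul]
  have hzero (r : ℕ) : PowerSeries.coeff r Z = 0 := by
    induction r with
    | zero =>
      rw [hZ, map_zero, zero_eq_neg] at hcoeff_zero
      exact PowerSeries.X_mul_cancel (hcoeff_zero.trans (mul_zero _).symm)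
    | succ r ih =>
      have h := hcoeff_succ r
      rw [hZ, map_zero, ih, mul_zero, smul_zero, zero_sub, sub_zero, zero_eq_neg] at h
      exact PowerSeries.X_mul_cancel (h.trans (mul_zero _).symm)
  ext r : 1
  rw [hzero, map_zero]

def map2 (F : A →ₐ[ℂ] B) : PowerSeries (PowerSeries A) →+* PowerSeries (PowerSeries B) :=
  PowerSeries.map (PowerSeries.map (F : A →+* B))

lemma coeff_coeff_map2 (F : A →ₐ[ℂ] B) (r s : ℕ) (z : PowerSeries (PowerSeries A)) :
    PowerSeries.coeff s (PowerSeries.coeff r (map2 F z)) =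
      F (PowerSeries.coeff s (PowerSeries.coeff r z)) := by
  simp [map2, PowerSeries.coeff_map]

lemma map2_Tx (F : A →ₐ[ℂ] B) {I : Type*} (t : I → I → ℕ → A) (i j : I) :
    map2 F (Tx t i j) = Tx (fun a b r => F (t a b r)) i j := by
  ext r s
  by_cases hr : r = 0 <;> simp [map2, Tx, PowerSeries.coeff_map, PowerSeries.coeff_C, hr]

lemma map2_Ty (F : A →ₐ[ℂ] B) {I : Type*} (t : I → I → ℕ → A) (i j : I) :
    map2 F (Ty t i j) = Ty (fun a b r => F (t a b r)) i j := by
  ext r s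
  by_cases hs : s = 0 <;> simp [map2, Ty, PowerSeries.coeff_map, PowerSeries.coeff_C, hs]

lemma map2_Xv (F : A →ₐ[ℂ] B) : map2 F (Xv A) = Xv B := by
  simp [map2, Xv]

lemma map2_Yv (F : A →ₐ[ℂ] B) : map2 F (Yv A) = Yv B := by
  simp [map2, Yv]

lemma map2_smul (F : A →ₐ[ℂ] B) (c : ℂ) (z : PowerSeries (PowerSeries A)) :
    map2 F (c • z) = c • map2 F z := by
  ext r s
  simp [coeff_coeff_map2]

end SeriesInAnInverseVariable

section RTT

variable {n : ℕ} {A B : Type*} [Ring A] [Algebra ℂ A] [Ring B] [Algebra ℂ B]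

lemma map2_relL (F : A →ₐ[ℂ] B) (t : Fin (NN n) → Fin (NN n) → ℕ → A) (i j k l : Fin (NN n)) :
    map2 F (relL n t i j k l) = relL n (fun a b r => F (t a b r)) i j k l := by
  simp only [relL, map_mul, map_sub, map2_smul, map2_Tx, map2_Ty, map2_Xv, map2_Yv]

lemma map2_relR (F : A →ₐ[ℂ] B) (t : Fin (NN n) → Fin (NN n) → ℕ → A) (i j k l : Fin (NN n)) :
    map2 F (relR n t i j k l) = relR n (fun a b r => F (t a b r)) i j k l := by
  simp only [relR, map_mul, map_sub, map2_smul, map2_Tx, map2_Ty, map2_Xv, map2_Yv, map_sum,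
    apply_ite (map2 F), map_zero]

end RTT

lemma TT_satisfiesRTT (n : ℕ) : SatisfiesRTT n (TT n) := by
  intro i j k l
  ext r s
  have h : yrel n (PowerSeries.coeff s (PowerSeries.coeff r (relL n (fgen n) i j k l)))
      (PowerSeries.coeff s (PowerSeries.coeff r (relR n (fgen n) i j k l))) :=
    ⟨i, j, k, l, r, s, rfl, rfl⟩
  have h' := RingQuot.mkAlgHom_rel ℂ h
  rwa [← coeff_coeff_map2, ← coeff_coeff_map2, map2_relL, map2_relR] at h'

section GlCorner

variable {n : ℕ} {A : Type*} [Ring A] [Algebra ℂ A]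

lemma pb_embgl (i : Fin n) : pb (embgl i) = 1 :=
  if_neg (Nat.ne_of_lt i.isLt)

lemma embgl_ne_pr (i k : Fin n) : embgl k ≠ pr (embgl i) := by
  intro h
  have h' := congrArg Fin.val h
  simp only [embgl, pr, idx] at h'
  omega

lemma embgl_injective : Function.Injective (embgl : Fin n → Fin (NN n)) :=
  fun _ _ h => Fin.ext (congrArg Fin.val h :)

lemma embgl_strictMono : StrictMono (embgl : Fin n → Fin (NN n)) :=
  fun _ _ h => h

lemma Yv_sub_Xv_sub_smul_commute (c : ℂ) (z : PowerSeries (PowerSeries A)) :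
    Commute (Yv A - Xv A - c • (Xv A * Yv A)) z :=
  ((Yv_commute z).sub_left (Xv_commute z)).sub_left
    (((Xv_commute z).mul_left (Yv_commute z)).smul_left c)

lemma SatisfiesRTT.gl_corner {t : Fin (NN n) → Fin (NN n) → ℕ → A} (ht : SatisfiesRTT n t)
    (i j k l : Fin n) :
    (Yv A - Xv A) * (Tx t (embgl i) (embgl j) * Ty t (embgl k) (embgl l) -
        Ty t (embgl k) (embgl l) * Tx t (embgl i) (embgl j)) =
      -((Xv A * Yv A) * (Tx t (embgl k) (embgl j) * Ty t (embgl i) (embgl l) -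
        Ty t (embgl k) (embgl j) * Tx t (embgl i) (embgl l))) := by
  have h := ht (embgl i) (embgl j) (embgl k) (embgl l)
  rw [relL, relR, if_neg (embgl_ne_pr i k), if_neg (embgl_ne_pr j l)] at h
  simp only [pb_embgl, sg] at h
  norm_num at h
  apply isLeftRegular_Yv_sub_Xv_sub_smul (kappa n)
  beta_reduce
  rw [← mul_assoc, (Yv_sub_Xv_sub_smul_commute _ _).eq, h,
    ← (Yv_sub_Xv_sub_smul_commute _ (Xv A * Yv A)).eq, ← neg_sub (Tx _ _ _ * _)]
  simp only [mul_assoc, mul_neg]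

end GlCorner

section GlYangianLift

variable {A : Type*} [Ring A] [Algebra ℂ A]

/-- `relLgl = relRgl` for a family of series coefficients in an arbitrary algebra. -/
def SatisfiesGlRTT {I : Type*} (t : I → I → ℕ → A) : Prop :=
  ∀ i j k l : I, (Yv A - Xv A) * (Tx t i j * Ty t k l - Ty t k l * Tx t i j) =
    (Xv A * Yv A) * (Tx t k j * Ty t i l - Ty t k j * Tx t i l)

lemma satisfiesGlRTT_neg_var {I : Type*} {t : I → I → ℕ → A}
    (ht : ∀ i j k l : I, (Yv A - Xv A) * (Tx t i j * Ty t k l - Ty t k l * Tx t i j) =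
      -((Xv A * Yv A) * (Tx t k j * Ty t i l - Ty t k j * Tx t i l))) :
    SatisfiesGlRTT (fun a b r => (-1 : ℂ) ^ r • t a b r) := by
  intro i j k l
  have h := congrArg negVarsHom (ht i j k l)
  simp only [map_mul, map_sub, map_neg, negVarsHom_Xv, negVarsHom_Yv, negVarsHom_Tx,
    negVarsHom_Ty, neg_mul_neg, neg_sub_neg] at h
  rwa [← neg_sub, neg_mul, neg_inj] at h

variable {N : ℕ} (t : Fin N → Fin N → ℕ → A)

def glFreeLift : FGl N →ₐ[ℂ] A :=
  FreeAlgebra.lift ℂ fun p => t p.1 p.2.1 (p.2.2 + 1)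

variable {t}

lemma glFreeLift_glgen (ht0 : ∀ i j, t i j 0 = if i = j then 1 else 0) (i j : Fin N) (r : ℕ) :
    glFreeLift t (glgen N i j r) = t i j r := by
  rcases r with _ | r
  · by_cases h : i = j <;> simp [glgen, ht0, h]
  · simp [glgen, glFreeLift]

lemma glFreeLift_rel (ht0 : ∀ i j, t i j 0 = if i = j then 1 else 0) (ht : SatisfiesGlRTT t)
    ⦃a b : FGl N⦄ (hab : glrel N a b) : glFreeLift t a = glFreeLift t b := by
  obtain ⟨i, j, k, l, r, s, rfl, rfl⟩ := hab
  have hgen : (fun a b r => glFreeLift t (glgen N a b r)) = t :=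
    funext fun a => funext fun b => funext (glFreeLift_glgen ht0 a b)
  rw [← coeff_coeff_map2, ← coeff_coeff_map2]
  simp only [relLgl, relRgl, map_mul, map_sub, map2_Tx, map2_Ty, map2_Xv, map2_Yv, hgen,
    ht i j k l]

def yglLift (ht0 : ∀ i j, t i j 0 = if i = j then 1 else 0) (ht : SatisfiesGlRTT t) :
    Ygl N →ₐ[ℂ] A :=
  RingQuot.liftAlgHom ℂ ⟨glFreeLift t, glFreeLift_rel ht0 ht⟩

lemma yglLift_TG (ht0 : ∀ i j, t i j 0 = if i = j then 1 else 0) (ht : SatisfiesGlRTT t)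
    (i j : Fin N) (r : ℕ) : yglLift ht0 ht (TG N i j r) = t i j r := by
  rw [TG, yglLift, RingQuot.liftAlgHom_mkAlgHom_apply, glFreeLift_glgen ht0]

end GlYangianLift

lemma TT_zero (n : ℕ) (i j : Fin (NN n)) : TT n i j 0 = if i = j then 1 else 0 := by
  by_cases h : i = j <;> simp [TT, fgen, h]

def glEmbedding (n : ℕ) : Ygl n →ₐ[ℂ] XX n :=
  yglLift (t := fun i j r => (-1 : ℂ) ^ r • TT n (embgl i) (embgl j) r)
    (fun i j => by simp [TT_zero, embgl_injective.eq_iff])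
    (satisfiesGlRTT_neg_var (TT_satisfiesRTT n).gl_corner)

lemma glEmbedding_TG (n : ℕ) (i j : Fin n) (r : ℕ) :
    glEmbedding n (TG n i j r) = ((-1 : ℂ) ^ r) • TT n (embgl i) (embgl j) r :=
  yglLift_TG _ _ i j r

theorem gl_yangian_embedding_general (n : ℕ) :
    ∃ φ : Ygl n →ₐ[ℂ] XX n,
      (∀ (i j : Fin n) (r : ℕ),
        φ (TG n i j r) = ((-1 : ℂ) ^ r) • TT n (embgl i) (embgl j) r) ∧
      (∀ (V : Type) [AddCommGroup V] [Module ℂ V] [Module (XX n) V]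
          [IsScalarTower ℂ (XX n) V] (ξ : V) (lam : Fin (NN n) → PowerSeries ℂ),
        IsHighestWeight n ξ lam →
          (∀ i j : Fin n, i < j → ∀ r : ℕ, φ (TG n i j r) • ξ = 0) ∧
          (∀ (i : Fin n) (r : ℕ),
            φ (TG n i i r) • ξ =
              ((-1 : ℂ) ^ r * PowerSeries.coeff r (lam (embgl i))) • ξ)) := by
  refine ⟨glEmbedding n, glEmbedding_TG n, fun V _ _ _ _ ξ lam hξ => ⟨?_, ?_⟩⟩
  · obtain ⟨-, -, hup, -⟩ := hξ
    intro i j hij r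
    rw [glEmbedding_TG, smul_assoc, hup _ _ (embgl_strictMono hij), smul_zero]
  · obtain ⟨-, -, -, hdiag, -⟩ := hξ
    intro i r
    rw [glEmbedding_TG, smul_assoc, hdiag, smul_smul]

/-- The assignment `t°_{ij}(u) ↦ t_{ij}(−u)`, `1 ≤ i,j ≤ n`, defines an
algebra homomorphism `Y(gl_n) → X(osp_{1|2n})`; consequently, for any highest weight
`X(osp_{1|2n})`-module with highest vector `ξ` and highest weight `λ(u)`, the cyclic span
`Y(gl_n)·ξ` is a highest weight `Y(gl_n)`-module with highest weight
`(λ_1(−u),…,λ_n(−u))`. -/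
theorem gl_yangian_embedding (n : ℕ) (hn : 1 ≤ n) :
    ∃ φ : Ygl n →ₐ[ℂ] XX n,
      (∀ (i j : Fin n) (r : ℕ),
        φ (TG n i j r) = ((-1 : ℂ) ^ r) • TT n (embgl i) (embgl j) r) ∧
      (∀ (V : Type) [AddCommGroup V] [Module ℂ V] [Module (XX n) V]
          [IsScalarTower ℂ (XX n) V] (ξ : V) (lam : Fin (NN n) → PowerSeries ℂ),
        IsHighestWeight n ξ lam →
          (∀ i j : Fin n, i < j → ∀ r : ℕ, φ (TG n i j r) • ξ = 0) ∧
          (∀ (i : Fin n) (r : ℕ),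
            φ (TG n i i r) • ξ =
              ((-1 : ℂ) ^ r * PowerSeries.coeff r (lam (embgl i))) • ξ)) :=
  gl_yangian_embedding_general n

end OspYangian
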